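/- The Strichartz hexacarpet K = Σ/∼ (with the quotient topology) is not homeomorphic to a closed 2-simplex in the plane, i.e., there is no homeomorphism from K onto the convex hull of three affinely independent points of ℝ². -/

import Mathlib

open Classical

/-- The space `Σ` of infinite words over the alphabet `X = {0,1,2,3,4,5} = ℤ/6`
(indexed from `0`: the letter `w₁` of the paper is `w 0`). -/
abbrev Word := ℕ → ZMod 6

/-- The metric `δ_r` on a word space: `δ_r(w,v) = r^ℓ` where `ℓ ≥ 1` is the first
(1-indexed) position at which `w` and `v` differ, and `δ_r(w,w) = 0`. -/
noncomputable def wordDist {X : Type*} (r : ℝ) (w v : ℕ → X) : ℝ :=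
  if h : w = v then 0
  else r ^ (Nat.find (Function.ne_iff.mp h) + 1)

/-- Prepending a letter to an infinite word: `σ_i(w) = iw`. -/
def prepend {X : Type*} (i : X) (w : ℕ → X) : ℕ → X
  | 0 => i
  | n + 1 => w n

/-- `α_k = u₁ + ⋯ + u_k` in `ℤ/6` (the sum of the first `k` letters of `u`). -/
def alphaSum (u : Word) (k : ℕ) : ZMod 6 := ∑ j ∈ Finset.range k, u j

/-- The map `f : Σ → Σ`, `f(u) = v` with `v₁ = u₁` and
`v_m = (−1)^{α_{m−1}} u_m + α_{m−1}` (mod 6); here `(−1)^α` is `+1` when `α ∈ ℤ/6` is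
even and `−1` when `α` is odd.  (In 0-indexed form, position `m` corresponds to index
`m−1`, and `α_0 = 0` is even, so the case `v₁ = u₁` is subsumed.) -/
noncomputable def fMap (u : Word) : Word := fun n =>
  (if Even (alphaSum u n) then u n else -(u n)) + alphaSum u n

/-- The generating relation of `∼`: `u` and `w` are of the forms `x i α v` and
`x j α v`, where `x` is a finite word (of length `ℓ`, occupying indices `< ℓ`),
`j = i + 1` (mod 6), `α ∈ {3,4}` if `i` is odd and `α ∈ {1,2}` if `i` is even, and
`v ∈ {0,5}^ℕ`. -/
def Tilde (u w : Word) : Prop :=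
  ∃ ℓ : ℕ, (∀ m < ℓ, u m = w m) ∧ w ℓ = u ℓ + 1 ∧ (∀ m > ℓ, u m = w m) ∧
    ((¬ Even (u ℓ) ∧ (u (ℓ + 1) = 3 ∨ u (ℓ + 1) = 4)) ∨
      (Even (u ℓ) ∧ (u (ℓ + 1) = 1 ∨ u (ℓ + 1) = 2))) ∧
    (∀ m, ℓ + 2 ≤ m → u m = 0 ∨ u m = 5)

/-- The equivalence relation `∼` on `Σ` generated by `Tilde`, as a setoid. -/
def simSetoid : Setoid Word := ⟨Relation.EqvGen Tilde, Relation.EqvGen.is_equivalence _⟩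

/-- The Strichartz hexacarpet `K = Σ/∼` (with the quotient topology, `ℤ/6` being
discrete and `Σ` carrying the product topology). -/
def Hexacarpet := Quotient simSetoid

instance : TopologicalSpace Hexacarpet :=
  instTopologicalSpaceQuotient

/-- The quotient map `π : Σ → K`. -/
def piK : Word → Hexacarpet := Quotient.mk simSetoid

/-!
Two words are identified by `∼` only if they form a `Tilde` pair, and every word has at most one
`Tilde` partner, so the quotient map `Σ → K` is at most two-to-one. A homeomorphism `K ≃ Δ` would
give a continuous surjection `G : Σ → Δ` with fibres of at most two points. The images under `G`
of the cylinders of a fixed, large length form a finite closed cover of `Δ` in which no point lies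
in three sets and no set meets all three sides. This contradicts the Lebesgue covering theorem for
the triangle, which follows from Sperner's lemma: label the vertices of a fine grid by the sides
met by a covering set containing them; a trichromatic small triangle then puts three different
sets within a Lebesgue number of each other.
-/

theorem Relation.eqvGen_iff_of_unique_neighbor {α : Type*} {r : α → α → Prop}
    (huniq : ∀ u v w, (r u v ∨ r v u) → (r u w ∨ r w u) → v = w) {u v : α} :
    Relation.EqvGen r u v ↔ u = v ∨ r u v ∨ r v u := by
  refine ⟨fun h => ?_, ?_⟩
  · induction h with
    | rel x y hxy => exact .inr (.inl hxy)
    | refl x => exact .inl rfl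
    | symm x y _ ih => rcases ih with rfl | h | h <;> tauto
    | trans x y z _ _ ihxy ihyz =>
      rcases ihxy with rfl | hxy
      · exact ihyz
      rcases ihyz with rfl | hyz
      · exact .inr hxy
      exact .inl (huniq y x z hxy.symm hyz)
  · rintro (rfl | h | h)
    · exact .refl u
    · exact .rel _ _ h
    · exact .symm _ _ (.rel _ _ h)

namespace Hexacarpet

instance : DecidablePred (Even : ZMod 6 → Prop) :=
  fun x => decidable_of_iff (∃ r, x = r + r) Iff.rfl

def LetterCond (i α : ZMod 6) : Prop :=
  (¬ Even i ∧ (α = 3 ∨ α = 4)) ∨ (Even i ∧ (α = 1 ∨ α = 2))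

instance (i α : ZMod 6) : Decidable (LetterCond i α) := by unfold LetterCond; infer_instance

theorem LetterCond.ne_zero_and_ne_five {i α : ZMod 6} : LetterCond i α → α ≠ 0 ∧ α ≠ 5 := by
  revert i α; decide

theorem LetterCond.not_succ {i α : ZMod 6} : LetterCond i α → ¬ LetterCond (i + 1) α := by
  revert i α; decide

def IsPivot (u : Word) (ℓ : ℕ) : Prop :=
  u (ℓ + 1) ≠ 0 ∧ u (ℓ + 1) ≠ 5 ∧ ∀ m, ℓ + 2 ≤ m → u m = 0 ∨ u m = 5

theorem IsPivot.unique {u : Word} {ℓ ℓ' : ℕ} (h : IsPivot u ℓ) (h' : IsPivot u ℓ') : ℓ = ℓ' := by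
  by_contra hne
  rcases Nat.lt_or_gt_of_ne hne with hlt | hlt
  · rcases h.2.2 (ℓ' + 1) (by omega) with h0 | h5
    exacts [h'.1 h0, h'.2.1 h5]
  · rcases h'.2.2 (ℓ + 1) (by omega) with h0 | h5
    exacts [h.1 h0, h.2.1 h5]

theorem IsPivot.of_forall_gt_eq {u w : Word} {ℓ : ℕ} (h : IsPivot u ℓ) (huw : ∀ m > ℓ, u m = w m) :
    IsPivot w ℓ := by
  obtain ⟨h0, h5, htail⟩ := h
  rw [huw _ (by omega)] at h0 h5
  exact ⟨h0, h5, fun m hm => huw m (by omega) ▸ htail m hm⟩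

def TildeAt (u w : Word) (ℓ : ℕ) : Prop :=
  (∀ m < ℓ, u m = w m) ∧ w ℓ = u ℓ + 1 ∧ (∀ m > ℓ, u m = w m) ∧ LetterCond (u ℓ) (u (ℓ + 1)) ∧
    (∀ m, ℓ + 2 ≤ m → u m = 0 ∨ u m = 5)

variable {u v w : Word} {ℓ : ℕ}

theorem TildeAt.isPivot_left (h : TildeAt u w ℓ) : IsPivot u ℓ :=
  ⟨h.2.2.2.1.ne_zero_and_ne_five.1, h.2.2.2.1.ne_zero_and_ne_five.2, h.2.2.2.2⟩

theorem TildeAt.isPivot_right (h : TildeAt u w ℓ) : IsPivot w ℓ :=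
  h.isPivot_left.of_forall_gt_eq h.2.2.1

theorem TildeAt.eq_of_eq_of_ne (h : TildeAt u w ℓ) {m : ℕ} (hm : m ≠ ℓ) :
    u m = w m := by
  rcases Nat.lt_or_gt_of_ne hm with hlt | hgt
  exacts [h.1 m hlt, h.2.2.1 m hgt]

theorem TildeAt.right_unique (hv : TildeAt u v ℓ) (hw : TildeAt u w ℓ) : v = w := by
  funext m
  by_cases hm : m = ℓ
  · rw [hm, hv.2.1, hw.2.1]
  · rw [← hv.eq_of_eq_of_ne hm, hw.eq_of_eq_of_ne hm]

theorem TildeAt.left_unique (hv : TildeAt v u ℓ) (hw : TildeAt w u ℓ) : v = w := by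
  funext m
  by_cases hm : m = ℓ
  · rw [hm]; exact add_right_cancel (hv.2.1.symm.trans hw.2.1)
  · rw [hv.eq_of_eq_of_ne hm, hw.eq_of_eq_of_ne hm]

theorem TildeAt.not_tildeAt (hv : TildeAt u v ℓ) (hw : TildeAt w u ℓ) : False := by
  obtain ⟨-, hwℓ, hgt, hcond, -⟩ := hw
  have hvcond := hv.2.2.2.1
  rw [hwℓ, ← hgt (ℓ + 1) (by omega)] at hvcond
  exact hcond.not_succ hvcond

/-- The position of a `Tilde` step is the pivot of both words, so it is determined by either. -/
theorem eq_of_adjacent (hv : Tilde u v ∨ Tilde v u) (hw : Tilde u w ∨ Tilde w u) : v = w := by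
  have pivot : ∀ {x : Word}, (Tilde u x ∨ Tilde x u) →
      ∃ ℓ, IsPivot u ℓ ∧ (TildeAt u x ℓ ∨ TildeAt x u ℓ) := by
    rintro x (⟨ℓ, h⟩ | ⟨ℓ, h⟩)
    exacts [⟨ℓ, TildeAt.isPivot_left h, .inl h⟩, ⟨ℓ, TildeAt.isPivot_right h, .inr h⟩]
  obtain ⟨ℓ, hℓ, hv⟩ := pivot hv
  obtain ⟨ℓ', hℓ', hw⟩ := pivot hw
  obtain rfl := hℓ.unique hℓ'
  rcases hv with hv | hv <;> rcases hw with hw | hw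
  exacts [hv.right_unique hw, (hv.not_tildeAt hw).elim, (hw.not_tildeAt hv).elim,
    hv.left_unique hw]

theorem piK_eq_iff : piK u = piK v ↔ u = v ∨ Tilde u v ∨ Tilde v u :=
  Quotient.eq.trans (Relation.eqvGen_iff_of_unique_neighbor fun _ _ _ => eq_of_adjacent)

theorem eq_or_eq_or_eq_of_piK_eq (huv : piK u = piK v) (hvw : piK v = piK w) :
    u = v ∨ v = w ∨ u = w := by
  rcases piK_eq_iff.1 huv with huv | huv
  · exact .inl huv
  rcases piK_eq_iff.1 hvw with hvw | hvw
  · exact .inr (.inl hvw)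
  exact .inr (.inr (eq_of_adjacent (Or.symm huv) hvw))

end Hexacarpet

namespace Sperner

open Finset

def Trichromatic (x y z : Fin 3) : Prop := x ≠ y ∧ x ≠ z ∧ y ≠ z

theorem Trichromatic.swap_left {x y z : Fin 3} (h : Trichromatic x y z) : Trichromatic y x z :=
  ⟨h.1.symm, h.2.2, h.2.1⟩

theorem Trichromatic.swap_right {x y z : Fin 3} (h : Trichromatic x y z) : Trichromatic x z y :=
  ⟨h.2.1, h.1, h.2.2.symm⟩

/-- An edge is a door if its endpoints are labelled `1` and `2`. -/
def door (x y : Fin 3) : ZMod 2 := if x ≠ 0 ∧ y ≠ 0 ∧ x ≠ y then 1 else 0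

theorem door_comm : ∀ x y : Fin 3, door x y = door y x := by decide

theorem door_eq_add_door :
    ∀ x y z : Fin 3, ¬ Trichromatic x y z → door x z = door x y + door y z := by
  unfold Trichromatic; decide

theorem door_eq_zero_of_ne_one : ∀ x y : Fin 3, x ≠ 1 → y ≠ 1 → door x y = 0 := by decide

theorem door_eq_zero_of_ne_two : ∀ x y : Fin 3, x ≠ 2 → y ≠ 2 → door x y = 0 := by decide

theorem door_eq_sub : ∀ x y : Fin 3, x ≠ 0 → y ≠ 0 →
    door x y = (if y = 2 then 1 else 0) - (if x = 2 then 1 else 0) := by decide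

theorem sum_door_path (f : ℕ → Fin 3) (m : ℕ) (hf : ∀ k ≤ m, f k ≠ 0) :
    ∑ k ∈ range m, door (f k) (f (k + 1)) =
      (if f m = 2 then 1 else 0) - (if f 0 = 2 then 1 else 0) := by
  rw [← sum_range_sub (fun k => if f k = 2 then (1 : ZMod 2) else 0)]
  refine sum_congr rfl fun k hk => door_eq_sub _ _ (hf k ?_) (hf (k + 1) ?_) <;>
    simp only [mem_range] at hk <;> omega

/-- Door parity across a strip of triangles with base `u 0, …, u (m + 1)` and top
`v 0, …, v m`, none of them trichromatic. -/
theorem sum_door_strip (u v : ℕ → Fin 3) (m : ℕ)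
    (hup : ∀ i ≤ m, ¬ Trichromatic (u i) (u (i + 1)) (v i))
    (hdown : ∀ i < m, ¬ Trichromatic (v (i + 1)) (u (i + 1)) (v i)) :
    ∑ i ∈ range (m + 1), door (u i) (u (i + 1)) + ∑ i ∈ range m, door (v i) (v (i + 1)) =
      door (u 0) (v 0) + door (u (m + 1)) (v m) := by
  induction m with
  | zero =>
    have hup0 := door_eq_add_door (u 0) (v 0) (u 1) fun h => hup 0 le_rfl h.swap_right
    simp only [zero_add, range_one, sum_singleton, range_zero, sum_empty, add_zero]
    rw [hup0, door_comm (v 0)]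
  | succ m ih =>
    have hdown_m := door_eq_add_door (u (m + 1)) (v m) (v (m + 1)) fun h =>
      hdown m (by omega) h.swap_right.swap_left
    have hup_m := door_eq_add_door (u (m + 1 + 1)) (u (m + 1)) (v (m + 1)) fun h =>
      hup (m + 1) le_rfl h.swap_left
    have ih' := ih (fun i hi => hup i (by omega)) (fun i hi => hdown i (by omega))
    rw [sum_range_succ (fun i => door (u i) (u (i + 1))) (m + 1),
      sum_range_succ (fun i => door (v i) (v (i + 1))) m]
    linear_combination ih' - hup_m - hdown_m + door_comm (u (m + 1)) (u (m + 1 + 1))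

/-- Sperner's lemma for the triangle `{(i, j) | i + j ≤ n}` subdivided into the triangles
`(i, j), (i + 1, j), (i, j + 1)` and `(i + 1, j + 1), (i + 1, j), (i, j + 1)`. -/
theorem exists_trichromatic (n : ℕ) (col : ℕ → ℕ → Fin 3)
    (h0 : ∀ i j, i + j = n → col i j ≠ 0) (h1 : ∀ j ≤ n, col 0 j ≠ 1)
    (h2 : ∀ i ≤ n, col i 0 ≠ 2) :
    ∃ i j, (i + j < n ∧ Trichromatic (col i j) (col (i + 1) j) (col i (j + 1))) ∨
      (i + j + 1 < n ∧ Trichromatic (col (i + 1) (j + 1)) (col (i + 1) j) (col i (j + 1))) := by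
  by_contra! hnone
  set R : ℕ → ZMod 2 := fun j => ∑ i ∈ range (n - j), door (col i j) (col (i + 1) j) with hR
  have hstrip :
      ∀ j < n, R j + R (j + 1) = door (col (n - j) j) (col (n - (j + 1)) (j + 1)) := by
    intro j hj
    have h := sum_door_strip (col · j) (col · (j + 1)) (n - (j + 1))
      (fun i hi => (hnone i j).1 (by omega)) (fun i hi => (hnone i j).2 (by omega))
    rw [show n - (j + 1) + 1 = n - j by omega, door_eq_zero_of_ne_one _ _ (h1 j (by omega))
      (h1 (j + 1) (by omega)), zero_add] at h
    exact h
  have hR0 : R 0 = 0 :=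
    sum_eq_zero fun i hi => door_eq_zero_of_ne_two _ _ (h2 i (by simp at hi; omega))
      (h2 (i + 1) (by simp at hi; omega))
  have hRn : R n = 0 := by simp [hR]
  have hhyp := sum_door_path (fun k => col (n - k) k) n fun k hk => h0 _ _ (by omega)
  have hcorner_b : col n 0 = 1 := by
    have := h0 n 0 (by omega); have := h2 n le_rfl; omega
  have hcorner_c : col 0 n = 2 := by
    have := h0 0 n (by omega); have := h1 n le_rfl; omega
  simp only [Nat.sub_self, Nat.sub_zero, hcorner_b, hcorner_c] at hhyp
  have htel := sum_range_sub R n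
  simp only [ZModModule.sub_eq_add, hR0, hRn] at htel
  rw [sum_congr rfl fun j hj => (add_comm _ _).trans (hstrip j (mem_range.1 hj)), hhyp] at htel
  exact absurd htel (by decide)

end Sperner

open Metric in
theorem IsCompact.exists_forall_ncard_ball_inter_le {α ι : Type*} [PseudoMetricSpace α]
    [Finite ι] {s : Set α} (hs : IsCompact s) {F : ι → Set α} (hF : ∀ i, IsClosed (F i)) {k : ℕ}
    (hk : ∀ x ∈ s, {i | x ∈ F i}.ncard ≤ k) :
    ∃ δ > 0, ∀ x ∈ s, {i | (ball x δ ∩ F i).Nonempty}.ncard ≤ k := by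
  let U : {T : Set ι // T.ncard ≤ k} → Set α := fun T => (⋃ i ∈ (T : Set ι)ᶜ, F i)ᶜ
  have hU : ∀ T, IsOpen (U T) := fun T =>
    ((Set.toFinite _).isClosed_biUnion fun i _ => hF i).isOpen_compl
  have hcover : s ⊆ ⋃ T, U T := fun x hx => Set.mem_iUnion.2
    ⟨⟨{i | x ∈ F i}, hk x hx⟩, by simp [U]⟩
  obtain ⟨δ, hδ, hball⟩ := lebesgue_number_lemma_of_metric hs hU hcover
  refine ⟨δ, hδ, fun x hx => ?_⟩
  obtain ⟨T, hT⟩ := hball x hx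
  refine le_trans (Set.ncard_le_ncard (fun i ⟨y, hy, hyi⟩ => ?_) (Set.toFinite _)) T.2
  by_contra hi
  exact hT hy (Set.mem_biUnion hi hyi)

theorem AffineIndependent.segment_inter_segment_inter_segment {E : Type*} [AddCommGroup E]
    [Module ℝ E] {a b c : E} (h : AffineIndependent ℝ ![a, b, c]) :
    segment ℝ b c ∩ segment ℝ a c ∩ segment ℝ a b = ∅ := by
  classical
  have hne : ∀ i j : Fin 3, i ≠ j → ![a, b, c] i ≠ ![a, b, c] j := fun i j => h.injective.ne
  have hab : a ≠ b := hne 0 1 (by decide)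
  have hac : a ≠ c := hne 0 2 (by decide)
  have hbc : b ≠ c := hne 1 2 (by decide)
  have hs : AffineIndependent ℝ ((↑) : ({a, b, c} : Finset E) → E) := by
    have hrange : Set.range ![a, b, c] = (({a, b, c} : Finset E) : Set E) := by
      ext x; simp [eq_comm, or_comm, or_left_comm]
    have := h.range
    rwa [hrange] at this
  have hempty : ({b, c} ∩ {a, c} ∩ {a, b} : Finset E) = ∅ := by
    ext x; simp only [Finset.mem_inter, Finset.mem_insert, Finset.mem_singleton]
    grind
  have h₁ := hs.convexHull_inter (t₁ := {b, c}) (t₂ := {a, c})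
    (by simp [Finset.subset_iff]) (by simp [Finset.subset_iff])
  have h₂ := hs.convexHull_inter (t₁ := {b, c} ∩ {a, c}) (t₂ := {a, b})
    (by simp [Finset.subset_iff]) (by simp [Finset.subset_iff])
  simp only [← convexHull_pair, ← Finset.coe_pair]
  rw [← h₁, ← Finset.coe_inter, ← h₂, ← Finset.coe_inter, hempty, Finset.coe_empty,
    convexHull_empty]

open Metric in
theorem AffineIndependent.exists_pos_disjoint_segment_of_dist_lt {E : Type*}
    [NormedAddCommGroup E] [NormedSpace ℝ E] {a b c : E} (habc : AffineIndependent ℝ ![a, b, c]) :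
    ∃ ε > 0, ∀ S : Set E, (∀ x ∈ S, ∀ y ∈ S, dist x y < ε) →
      ¬ Disjoint S (segment ℝ b c) → ¬ Disjoint S (segment ℝ a c) →
        Disjoint S (segment ℝ a b) := by
  have hclosed : ∀ x y : E, IsClosed (segment ℝ x y) := fun x y => by
    rw [← convexHull_pair]; exact ((Set.toFinite _).isCompact_convexHull (𝕜 := ℝ)).isClosed
  let side : Fin 3 → Set E := ![segment ℝ b c, segment ℝ a c, segment ℝ a b]
  have hcover : convexHull ℝ {a, b, c} ⊆ ⋃ k, (side k)ᶜ := fun x _ => by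
    have hx : x ∉ segment ℝ b c ∩ segment ℝ a c ∩ segment ℝ a b := by
      rw [habc.segment_inter_segment_inter_segment]; exact Set.notMem_empty x
    by_contra! hall
    simp only [Set.mem_iUnion, Set.mem_compl_iff, not_exists, not_not] at hall
    exact hx ⟨⟨hall 0, hall 1⟩, hall 2⟩
  obtain ⟨ε, hε, hball⟩ := lebesgue_number_lemma_of_metric
    ((Set.toFinite {a, b, c}).isCompact_convexHull (𝕜 := ℝ))
    (fun k => by fin_cases k <;> exact (hclosed _ _).isOpen_compl) hcover
  refine ⟨ε, hε, fun S hS hbc hac => ?_⟩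
  obtain ⟨y, hyS, hy⟩ := Set.not_disjoint_iff.1 hbc
  have hyΔ : y ∈ convexHull ℝ {a, b, c} :=
    segment_subset_convexHull (by simp) (by simp) hy
  have hSball : S ⊆ ball y ε := fun x hx => hS x hx y hyS
  obtain ⟨k, hk⟩ := hball y hyΔ
  fin_cases k
  · exact absurd hy (hk (mem_ball_self hε))
  · obtain ⟨x, hxS, hx⟩ := Set.not_disjoint_iff.1 hac
    exact absurd hx (hk (hSball hxS))
  · exact Set.disjoint_left.2 fun x hxS => hk (hSball hxS)

section TriangleGrid

variable {E : Type*} [NormedAddCommGroup E] [NormedSpace ℝ E] (a b c : E) (n : ℕ)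

/-- The vertex `(i, j)` of the subdivision of the triangle `abc` into `n²` triangles. -/
noncomputable def trianglePoint (i j : ℕ) : E :=
  a + ((i : ℝ) / n) • (b - a) + ((j : ℝ) / n) • (c - a)

variable {a b c n}

theorem trianglePoint_mem_convexHull {i j : ℕ} (hij : i + j ≤ n) :
    trianglePoint a b c n i j ∈ convexHull ℝ {a, b, c} := by
  have hle : (i : ℝ) / n + (j : ℝ) / n ≤ 1 := by
    rw [← add_div]
    exact div_le_one_of_le₀ (by exact_mod_cast hij) (Nat.cast_nonneg n)
  have hmem := (convex_convexHull ℝ ({a, b, c} : Set E)).sum_mem (t := Finset.univ)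
    (w := ![1 - (i : ℝ) / n - (j : ℝ) / n, (i : ℝ) / n, (j : ℝ) / n]) (z := ![a, b, c])
    (fun k _ => by fin_cases k <;> simp <;> first | linarith | positivity)
    (by simp [Fin.sum_univ_three]; ring)
    (fun k _ => subset_convexHull ℝ _ (by fin_cases k <;> simp))
  convert hmem using 1
  simp [Fin.sum_univ_three, trianglePoint]
  module

theorem trianglePoint_mem_segment_of_add_eq {i j : ℕ} (hn : n ≠ 0) (hij : i + j = n) :
    trianglePoint a b c n i j ∈ segment ℝ b c := by
  have hi : (i : ℝ) / n = 1 - (j : ℝ) / n := by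
    rw [eq_sub_iff_add_eq, ← add_div, div_eq_one_iff_eq (by exact_mod_cast hn)]
    exact_mod_cast hij
  refine ⟨(i : ℝ) / n, (j : ℝ) / n, by positivity, by positivity, by rw [hi]; ring, ?_⟩
  rw [trianglePoint, hi]
  module

theorem trianglePoint_zero_left_mem_segment {j : ℕ} (hj : j ≤ n) :
    trianglePoint a b c n 0 j ∈ segment ℝ a c := by
  refine ⟨1 - (j : ℝ) / n, (j : ℝ) / n, ?_, by positivity, by ring, ?_⟩
  · exact sub_nonneg.2 (div_le_one_of_le₀ (by exact_mod_cast hj) (Nat.cast_nonneg n))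
  · simp only [trianglePoint, CharP.cast_eq_zero, zero_div, zero_smul, add_zero]
    module

theorem trianglePoint_zero_right_mem_segment {i : ℕ} (hi : i ≤ n) :
    trianglePoint a b c n i 0 ∈ segment ℝ a b := by
  refine ⟨1 - (i : ℝ) / n, (i : ℝ) / n, ?_, by positivity, by ring, ?_⟩
  · exact sub_nonneg.2 (div_le_one_of_le₀ (by exact_mod_cast hi) (Nat.cast_nonneg n))
  · simp only [trianglePoint, CharP.cast_eq_zero, zero_div, zero_smul, add_zero]
    module

theorem dist_trianglePoint_succ_left (i j : ℕ) :
    dist (trianglePoint a b c n (i + 1) j) (trianglePoint a b c n i j) = ‖b - a‖ / n := by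
  rw [dist_eq_norm, show trianglePoint a b c n (i + 1) j - trianglePoint a b c n i j =
    (1 / (n : ℝ)) • (b - a) by simp only [trianglePoint]; push_cast; module, norm_smul]
  simp [div_eq_inv_mul]

theorem dist_trianglePoint_succ_right (i j : ℕ) :
    dist (trianglePoint a b c n i (j + 1)) (trianglePoint a b c n i j) = ‖c - a‖ / n := by
  rw [dist_eq_norm, show trianglePoint a b c n i (j + 1) - trianglePoint a b c n i j =
    (1 / (n : ℝ)) • (c - a) by simp only [trianglePoint]; push_cast; module, norm_smul]
  simp [div_eq_inv_mul]

end TriangleGrid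

section Covering

open Metric

variable {E ι : Type*} [NormedAddCommGroup E] [NormedSpace ℝ E] {a b c : E} {S : Set E}

noncomputable def sideLabel (a b c : E) (S : Set E) : Fin 3 :=
  if Disjoint S (segment ℝ b c) then 0 else if Disjoint S (segment ℝ a c) then 1 else 2

theorem sideLabel_ne_zero {x : E} (hxS : x ∈ S) (hx : x ∈ segment ℝ b c) :
    sideLabel a b c S ≠ 0 := by
  rw [sideLabel, if_neg (Set.not_disjoint_iff.2 ⟨x, hxS, hx⟩)]
  split_ifs <;> decide

theorem sideLabel_ne_one {x : E} (hxS : x ∈ S) (hx : x ∈ segment ℝ a c) :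
    sideLabel a b c S ≠ 1 := by
  unfold sideLabel
  rw [if_neg (Set.not_disjoint_iff.2 ⟨x, hxS, hx⟩)]
  split_ifs <;> decide

theorem sideLabel_eq_two (h : sideLabel a b c S = 2) :
    ¬ Disjoint S (segment ℝ b c) ∧ ¬ Disjoint S (segment ℝ a c) := by
  unfold sideLabel at h
  split_ifs at h with hbc hac <;> simp_all

theorem exists_two_lt_ncard_closedBall_inter_of_covering_triangle [Finite ι] {F : ι → Set E}
    (hcover : convexHull ℝ {a, b, c} ⊆ ⋃ i, F i)
    (hsides : ∀ i, ¬ Disjoint (F i) (segment ℝ b c) → ¬ Disjoint (F i) (segment ℝ a c) →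
      Disjoint (F i) (segment ℝ a b)) {n : ℕ} (hn : n ≠ 0) :
    ∃ x ∈ convexHull ℝ {a, b, c},
      2 < {i | (closedBall x (max ‖b - a‖ ‖c - a‖ / n) ∩ F i).Nonempty}.ncard := by
  set P := trianglePoint a b c n
  have hpick : ∀ i j, ∃ k, i + j ≤ n → P i j ∈ F k := fun i j => by
    obtain ⟨k, -⟩ := Set.mem_iUnion.1 (hcover (subset_convexHull ℝ _ (Set.mem_insert a _)))
    by_cases hij : i + j ≤ n
    · obtain ⟨k, hk⟩ := Set.mem_iUnion.1 (hcover (trianglePoint_mem_convexHull hij))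
      exact ⟨k, fun _ => hk⟩
    · exact ⟨k, fun h => absurd h hij⟩
  choose idx hidx using hpick
  set col := fun i j => sideLabel a b c (F (idx i j))
  have hnear : ∀ p q r : ℕ × ℕ, p.1 + p.2 ≤ n → q.1 + q.2 ≤ n → r.1 + r.2 ≤ n →
      dist (P q.1 q.2) (P p.1 p.2) ≤ max ‖b - a‖ ‖c - a‖ / n →
      dist (P r.1 r.2) (P p.1 p.2) ≤ max ‖b - a‖ ‖c - a‖ / n →
      Sperner.Trichromatic (col p.1 p.2) (col q.1 q.2) (col r.1 r.2) →
      ∃ x ∈ convexHull ℝ {a, b, c},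
        2 < {i | (closedBall x (max ‖b - a‖ ‖c - a‖ / n) ∩ F i).Nonempty}.ncard := by
    intro p q r hp hq hr hpq hpr ⟨hne_pq, hne_pr, hne_qr⟩
    refine ⟨P p.1 p.2, trianglePoint_mem_convexHull hp, (Set.two_lt_ncard_iff (Set.toFinite _)).2
      ⟨_, _, _, ⟨_, mem_closedBall_self (by positivity), hidx _ _ hp⟩, ⟨_, hpq, hidx _ _ hq⟩,
        ⟨_, hpr, hidx _ _ hr⟩, ?_, ?_, ?_⟩⟩ <;> intro h
    exacts [hne_pq (by simp [col, h]), hne_pr (by simp [col, h]), hne_qr (by simp [col, h])]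
  have hb : ‖b - a‖ / n ≤ max ‖b - a‖ ‖c - a‖ / n := by gcongr; exact le_max_left _ _
  have hc : ‖c - a‖ / n ≤ max ‖b - a‖ ‖c - a‖ / n := by gcongr; exact le_max_right _ _
  obtain ⟨i, j, (⟨hij, htri⟩ | ⟨hij, htri⟩)⟩ := Sperner.exists_trichromatic n col
    (fun i j hij => sideLabel_ne_zero (hidx i j hij.le)
      (trianglePoint_mem_segment_of_add_eq hn hij))
    (fun j hj => sideLabel_ne_one (hidx 0 j (by omega)) (trianglePoint_zero_left_mem_segment hj))
    (fun i hi h2 => (sideLabel_eq_two h2).elim fun hbc hac =>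
      Set.not_disjoint_iff.2 ⟨_, hidx i 0 (by omega), trianglePoint_zero_right_mem_segment hi⟩
        (hsides _ hbc hac))
  · exact hnear (i, j) (i + 1, j) (i, j + 1) (by simp; omega) (by simp; omega) (by simp; omega)
      ((dist_trianglePoint_succ_left i j).trans_le hb)
      ((dist_trianglePoint_succ_right i j).trans_le hc) htri
  · exact hnear (i + 1, j + 1) (i + 1, j) (i, j + 1) (by simp; omega) (by simp; omega)
      (by simp; omega) (dist_comm (P _ _) _ ▸ (dist_trianglePoint_succ_right _ j).trans_le hc)
      (dist_comm (P _ _) _ ▸ (dist_trianglePoint_succ_left i _).trans_le hb) htri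

/-- A form of the Lebesgue covering theorem for the triangle. -/
theorem exists_two_lt_ncard_of_covering_triangle [Finite ι] {F : ι → Set E}
    (hF : ∀ i, IsClosed (F i)) (hcover : convexHull ℝ {a, b, c} ⊆ ⋃ i, F i)
    (hsides : ∀ i, ¬ Disjoint (F i) (segment ℝ b c) → ¬ Disjoint (F i) (segment ℝ a c) →
      Disjoint (F i) (segment ℝ a b)) :
    ∃ x ∈ convexHull ℝ {a, b, c}, 2 < {i | x ∈ F i}.ncard := by
  by_contra! horder
  obtain ⟨δ, hδ, hball⟩ :=
    ((Set.toFinite {a, b, c}).isCompact_convexHull (𝕜 := ℝ)).exists_forall_ncard_ball_inter_le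
      hF horder
  obtain ⟨n, hn, hmesh⟩ := ((Filter.eventually_ne_atTop 0).and
    ((tendsto_const_div_atTop_nhds_zero_nat (max ‖b - a‖ ‖c - a‖)).eventually
      (gt_mem_nhds hδ))).exists
  obtain ⟨x, hx, hthree⟩ :=
    exists_two_lt_ncard_closedBall_inter_of_covering_triangle hcover hsides hn
  refine not_lt_of_ge (hball x hx) (hthree.trans_le (Set.ncard_le_ncard ?_ (Set.toFinite _)))
  exact fun i ⟨y, hy, hyi⟩ => ⟨y, closedBall_subset_ball hmesh hy, hyi⟩

end Covering

theorem Continuous.exists_forall_mem_cylinder_dist_lt {α F : Type*} [TopologicalSpace α]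
    [DiscreteTopology α] [Finite α] [PseudoMetricSpace F] {G : (ℕ → α) → F} (hG : Continuous G)
    {ε : ℝ} (hε : 0 < ε) : ∃ N, ∀ u v, v ∈ PiNat.cylinder u N → dist (G v) (G u) < ε := by
  let : MetricSpace (ℕ → α) := PiNat.metricSpace
  obtain ⟨δ, hδ, hGδ⟩ :=
    Metric.uniformContinuous_iff.1 (CompactSpace.uniformContinuous_of_continuous hG) ε hε
  obtain ⟨N, hN⟩ := exists_pow_lt_of_lt_one hδ one_half_lt_one
  exact ⟨N, fun u v hv => hGδ ((PiNat.mem_cylinder_iff_dist_le.1 hv).trans_lt hN)⟩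

theorem not_convexHull_subset_range_of_fiber_le_two {α E : Type*} [TopologicalSpace α]
    [DiscreteTopology α] [Finite α] [NormedAddCommGroup E] [NormedSpace ℝ E] {a b c : E}
    (habc : AffineIndependent ℝ ![a, b, c]) {G : (ℕ → α) → E} (hG : Continuous G)
    (hfiber : ∀ u v w, G u = G v → G v = G w → u = v ∨ v = w ∨ u = w) :
    ¬ convexHull ℝ {a, b, c} ⊆ Set.range G := by
  intro hsurj
  obtain ⟨ε, hε, hsmall⟩ := habc.exists_pos_disjoint_segment_of_dist_lt
  obtain ⟨N, hN⟩ := hG.exists_forall_mem_cylinder_dist_lt hε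
  let cyl : (Fin N → α) → Set (ℕ → α) := fun x => {u | ∀ i : Fin N, u i = x i}
  have hcyl : ∀ x, ∀ u ∈ cyl x, ∀ v ∈ cyl x, v ∈ PiNat.cylinder u N := fun x u hu v hv i hi =>
    (hv ⟨i, hi⟩).trans (hu ⟨i, hi⟩).symm
  have hclosed : ∀ x, IsClosed (G '' cyl x) := fun x => by
    have : IsClosed (cyl x) := by
      simpa only [cyl, Set.ofPred_forall] using
        isClosed_iInter fun i : Fin N => isClosed_eq (continuous_apply (i : ℕ)) continuous_const
    exact (this.isCompact.image hG).isClosed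
  obtain ⟨y, hy, hthree⟩ := exists_two_lt_ncard_of_covering_triangle hclosed
    (fun y hy => by
      obtain ⟨u, rfl⟩ := hsurj hy
      exact Set.mem_iUnion.2 ⟨fun i => u i, u, fun _ => rfl, rfl⟩)
    (fun x => hsmall _ (by
      rintro _ ⟨u, hu, rfl⟩ _ ⟨v, hv, rfl⟩
      exact hN v u (hcyl x v hv u hu)))
  obtain ⟨x₁, x₂, x₃, ⟨u₁, hu₁, rfl⟩, ⟨u₂, hu₂, h₂⟩, ⟨u₃, hu₃, h₃⟩, h₁₂, h₁₃, h₂₃⟩ :=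
    (Set.two_lt_ncard_iff (Set.toFinite _)).1 hthree
  have hne : ∀ {x x' u u'}, x ≠ x' → u ∈ cyl x → u' ∈ cyl x' → u ≠ u' := by
    rintro x x' u u' hxx' hu hu' rfl
    exact hxx' (funext fun i => (hu i).symm.trans (hu' i))
  rcases hfiber u₁ u₂ u₃ h₂.symm (h₂.trans h₃.symm) with h | h | h
  exacts [hne h₁₂ hu₁ hu₂ h, hne h₂₃ hu₂ hu₃ h, hne h₁₃ hu₁ hu₃ h]

/-- the Strichartz hexacarpet `K = Σ/∼` (with the quotient topology) is
not homeomorphic to a closed 2-simplex in the plane, i.e. to the convex hull of three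
affinely independent points of `ℝ²`. -/
theorem stmt14 (a b c : ℝ × ℝ) (h : AffineIndependent ℝ ![a, b, c]) :
    IsEmpty (Hexacarpet ≃ₜ (convexHull ℝ {a, b, c} : Set (ℝ × ℝ))) := by
  refine ⟨fun e => not_convexHull_subset_range_of_fiber_le_two h
    (G := fun u => (e (piK u) : ℝ × ℝ))
    (continuous_subtype_val.comp (e.continuous.comp continuous_quot_mk))
    (fun u v w huv hvw => ?_) fun y hy => ?_⟩
  · exact Hexacarpet.eq_or_eq_or_eq_of_piK_eq (e.injective (Subtype.ext huv))
      (e.injective (Subtype.ext hvw))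
  · obtain ⟨u, hu⟩ := Quotient.exists_rep (e.symm ⟨y, hy⟩)
    exact ⟨u, by simp [piK, hu]⟩
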